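/- arXiv:2101.04397 — 7 statements merged into one kernel-verified Lean document; each statement's English description precedes it below -/
import Mathlib

section
/- Let G_1 and G_2 be finite simple graphs, each of order at least two. Then for every natural number i ≥ 1, d_0(G_1 ∨ G_2, i) = d_0(G_1, i) + d_0(G_2, i), where G_1 ∨ G_2 is the join of G_1 and G_2. -/
open Finset

/-- `S` is a dominating set of `G`: every vertex not in `S` is adjacent to a vertex of `S`. -/
def IsDominatingSet {V : Type*} (G : SimpleGraph V) (S : Finset V) : Prop :=
  ∀ v : V, v ∉ S → ∃ u ∈ S, G.Adj u v

/-- `S` is an isolate dominating set of `G`: a dominating set whose induced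
subgraph has an isolated vertex. -/
def IsIsolateDominatingSet {V : Type*} (G : SimpleGraph V) (S : Finset V) : Prop :=
  IsDominatingSet G S ∧ ∃ v ∈ S, ∀ u ∈ S, ¬ G.Adj v u

/-- `d(G, i)`: the number of dominating sets of `G` of cardinality `i`. -/
noncomputable def domCount {V : Type*} [Fintype V] (G : SimpleGraph V) (i : ℕ) : ℕ :=
  Set.ncard {S : Finset V | IsDominatingSet G S ∧ S.card = i}

/-- `d₀(G, i)`: the number of isolate dominating sets of `G` of cardinality `i`. -/
noncomputable def isoDomCount {V : Type*} [Fintype V] (G : SimpleGraph V) (i : ℕ) : ℕ :=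
  Set.ncard {S : Finset V | IsIsolateDominatingSet G S ∧ S.card = i}

/-- `γ₀(G)`: the isolate domination number, the minimum cardinality of an
isolate dominating set of `G`. -/
noncomputable def isoDomNumber {V : Type*} [Fintype V] (G : SimpleGraph V) : ℕ :=
  sInf {k : ℕ | ∃ S : Finset V, IsIsolateDominatingSet G S ∧ S.card = k}

/-- The join `G₁ ∨ G₂` of two graphs: both graphs together with all edges between them. -/
def graphJoin {α β : Type*} (G : SimpleGraph α) (H : SimpleGraph β) :
    SimpleGraph (α ⊕ β) where
  Adj v w :=
    match v, w with
    | Sum.inl a, Sum.inl b => G.Adj a b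
    | Sum.inr a, Sum.inr b => H.Adj a b
    | Sum.inl _, Sum.inr _ => True
    | Sum.inr _, Sum.inl _ => True
  symm := by
    constructor
    rintro (a | a) (b | b) h <;> simp_all
    · exact G.adj_symm h
    · exact H.adj_symm h
  loopless := by
    constructor
    rintro (a | a) h <;> simp_all

/-!
In a join every vertex is adjacent to the whole other side, so a set with a vertex isolated in it
lies on one side. A nonempty set on one side dominates the other side outright, so it is isolate
dominating in the join iff it is so in its own graph. Hence the isolate dominating sets of the join
are those of `G₁` and those of `G₂`, two disjoint families.
-/

lemma IsIsolateDominatingSet.nonempty {V : Type*} {G : SimpleGraph V} {S : Finset V}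
    (hS : IsIsolateDominatingSet G S) : S.Nonempty :=
  let ⟨v, hv, _⟩ := hS.2
  ⟨v, hv⟩

lemma Finset.map_inl_ne_map_inr {α β : Type*} {A : Finset α} {B : Finset β} (hA : A.Nonempty) :
    A.map .inl ≠ B.map .inr := by
  intro h
  have := disjoint_map_inl_map_inr A B
  rw [← h, disjoint_self, bot_eq_empty, map_eq_empty] at this
  exact hA.ne_empty this

section graphJoin

variable {α β : Type*} {G : SimpleGraph α} {H : SimpleGraph β}

@[simp]
lemma graphJoin_adj_inl_inl {a a' : α} : (graphJoin G H).Adj (.inl a) (.inl a') ↔ G.Adj a a' :=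
  Iff.rfl

@[simp]
lemma graphJoin_adj_inr_inr {b b' : β} : (graphJoin G H).Adj (.inr b) (.inr b') ↔ H.Adj b b' :=
  Iff.rfl

lemma isIsolateDominatingSet_graphJoin_map_inl {A : Finset α} :
    IsIsolateDominatingSet (graphJoin G H) (A.map .inl) ↔ IsIsolateDominatingSet G A := by
  constructor
  · rintro ⟨hdom, v, hv, hiso⟩
    obtain ⟨a, ha, rfl⟩ := mem_map.1 hv
    refine ⟨fun a' ha' => ?_, a, ha, fun a' ha' => by simpa using hiso _ (mem_map_of_mem _ ha')⟩
    obtain ⟨u, hu, hadj⟩ := hdom (.inl a') (by simpa using ha')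
    obtain ⟨c, hc, rfl⟩ := mem_map.1 hu
    exact ⟨c, hc, hadj⟩
  · rintro ⟨hdom, a, ha, hiso⟩
    refine ⟨?_, .inl a, mem_map_of_mem _ ha, ?_⟩
    · rintro (a' | b) hx
      · obtain ⟨c, hc, hadj⟩ := hdom a' (by simpa using hx)
        exact ⟨.inl c, mem_map_of_mem _ hc, hadj⟩
      · exact ⟨.inl a, mem_map_of_mem _ ha, trivial⟩
    · simpa using hiso

lemma isIsolateDominatingSet_graphJoin_map_inr {B : Finset β} :
    IsIsolateDominatingSet (graphJoin G H) (B.map .inr) ↔ IsIsolateDominatingSet H B := by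
  constructor
  · rintro ⟨hdom, v, hv, hiso⟩
    obtain ⟨b, hb, rfl⟩ := mem_map.1 hv
    refine ⟨fun b' hb' => ?_, b, hb, fun b' hb' => by simpa using hiso _ (mem_map_of_mem _ hb')⟩
    obtain ⟨u, hu, hadj⟩ := hdom (.inr b') (by simpa using hb')
    obtain ⟨c, hc, rfl⟩ := mem_map.1 hu
    exact ⟨c, hc, hadj⟩
  · rintro ⟨hdom, b, hb, hiso⟩
    refine ⟨?_, .inr b, mem_map_of_mem _ hb, ?_⟩
    · rintro (a | b') hx
      · exact ⟨.inr b, mem_map_of_mem _ hb, trivial⟩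
      · obtain ⟨c, hc, hadj⟩ := hdom b' (by simpa using hx)
        exact ⟨.inr c, mem_map_of_mem _ hc, hadj⟩
    · simpa using hiso

lemma IsIsolateDominatingSet.exists_eq_map_inl_or_inr {S : Finset (α ⊕ β)}
    (hS : IsIsolateDominatingSet (graphJoin G H) S) :
    (∃ A : Finset α, S = A.map .inl) ∨ ∃ B : Finset β, S = B.map .inr := by
  obtain ⟨-, v, hv, hiso⟩ := hS
  rcases v with a | b
  · refine .inl ⟨S.toLeft, le_antisymm ?_ (map_inl_subset_iff_subset_toLeft.2 le_rfl)⟩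
    refine subset_map_inl.2 ⟨le_rfl, eq_empty_of_forall_notMem fun b hb => ?_⟩
    exact hiso _ (mem_toRight.1 hb) trivial
  · refine .inr ⟨S.toRight, le_antisymm ?_ (map_inr_subset_iff_subset_toRight.2 le_rfl)⟩
    refine subset_map_inr.2 ⟨eq_empty_of_forall_notMem fun a ha => ?_, le_rfl⟩
    exact hiso _ (mem_toLeft.1 ha) trivial

lemma setOf_isIsolateDominatingSet_graphJoin (i : ℕ) :
    {S : Finset (α ⊕ β) | IsIsolateDominatingSet (graphJoin G H) S ∧ S.card = i} =
      (·.map .inl) '' {A | IsIsolateDominatingSet G A ∧ A.card = i} ∪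
        (·.map .inr) '' {B | IsIsolateDominatingSet H B ∧ B.card = i} := by
  ext S
  simp only [Set.mem_union, Set.mem_image, Set.mem_ofPred_eq]
  constructor
  · rintro ⟨hS, rfl⟩
    rcases hS.exists_eq_map_inl_or_inr with ⟨A, rfl⟩ | ⟨B, rfl⟩
    · exact .inl ⟨A, ⟨isIsolateDominatingSet_graphJoin_map_inl.1 hS, (card_map _).symm⟩, rfl⟩
    · exact .inr ⟨B, ⟨isIsolateDominatingSet_graphJoin_map_inr.1 hS, (card_map _).symm⟩, rfl⟩
  · rintro (⟨A, ⟨hA, rfl⟩, rfl⟩ | ⟨B, ⟨hB, rfl⟩, rfl⟩)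
    · exact ⟨isIsolateDominatingSet_graphJoin_map_inl.2 hA, card_map _⟩
    · exact ⟨isIsolateDominatingSet_graphJoin_map_inr.2 hB, card_map _⟩

end graphJoin

theorem isoDomCount_join_general {α β : Type*} [Fintype α] [Fintype β]
    (G₁ : SimpleGraph α) (G₂ : SimpleGraph β)
    (i : ℕ) :
    isoDomCount (graphJoin G₁ G₂) i = isoDomCount G₁ i + isoDomCount G₂ i := by
  have hdisj : Disjoint ((·.map .inl) '' {A | IsIsolateDominatingSet G₁ A ∧ A.card = i})
      ((·.map .inr) '' {B : Finset β | IsIsolateDominatingSet G₂ B ∧ B.card = i}) := by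
    rw [Set.disjoint_left]
    rintro _ ⟨A, ⟨hA, -⟩, rfl⟩ ⟨B, -, hBA⟩
    exact map_inl_ne_map_inr hA.nonempty hBA.symm
  rw [isoDomCount, setOf_isIsolateDominatingSet_graphJoin,
    Set.ncard_union_eq hdisj (Set.toFinite _) (Set.toFinite _),
    Set.ncard_image_of_injective _ (map_injective _),
    Set.ncard_image_of_injective _ (map_injective _), isoDomCount, isoDomCount]

theorem isoDomCount_join {α β : Type*} [Fintype α] [Fintype β]
    (G₁ : SimpleGraph α) (G₂ : SimpleGraph β)
    (h₁ : 2 ≤ Fintype.card α) (h₂ : 2 ≤ Fintype.card β)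
    (i : ℕ) (hi : 1 ≤ i) :
    isoDomCount (graphJoin G₁ G₂) i = isoDomCount G₁ i + isoDomCount G₂ i :=
  isoDomCount_join_general G₁ G₂ i
end

section
/- For natural numbers n ≥ 4 and i ≥ 1, the number of dominating sets of the path P_n of cardinality i satisfies the recurrence d(P_n, i) = d(P_{n−1}, i−1) + d(P_{n−2}, i−1) + d(P_{n−3}, i−1). -/
open Finset

/-- ℕ-level version of domination for the path on `{0,...,n-1}`. -/
def NDom (n : ℕ) (A : Finset ℕ) : Prop :=
  (∀ a ∈ A, a < n) ∧ ∀ v < n, v ∉ A → ∃ u ∈ A, u = v + 1 ∨ v = u + 1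

noncomputable def ndomCount (n i : ℕ) : ℕ :=
  Set.ncard {A : Finset ℕ | NDom n A ∧ A.card = i}

lemma domCount_eq_ndomCount (n i : ℕ) :
    domCount (SimpleGraph.pathGraph n) i = ndomCount n i := by
  have hinj : Function.Injective (fun S : Finset (Fin n) => S.map Fin.valEmbedding) :=
    fun S T h => Finset.map_injective _ h
  have himg : (fun S : Finset (Fin n) => S.map Fin.valEmbedding) ''
      {S | IsDominatingSet (SimpleGraph.pathGraph n) S ∧ S.card = i}
      = {A | NDom n A ∧ A.card = i} := by
    ext A
    simp only [Set.mem_image, Set.mem_setOf_eq]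
    constructor
    · rintro ⟨S, ⟨hS, hScard⟩, rfl⟩
      refine ⟨⟨?_, ?_⟩, by simp [hScard]⟩
      · intro a ha
        simp only [Finset.mem_map, Fin.valEmbedding_apply] at ha
        obtain ⟨b, _, rfl⟩ := ha; exact b.isLt
      · intro v hv hvA
        have : (⟨v, hv⟩ : Fin n) ∉ S := fun h => hvA (Finset.mem_map.2 ⟨_, h, rfl⟩)
        obtain ⟨u, hu, hadj⟩ := hS _ this
        rw [SimpleGraph.pathGraph_adj] at hadj
        refine ⟨u.val, Finset.mem_map.2 ⟨u, hu, rfl⟩, ?_⟩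
        rcases hadj with h | h
        · exact Or.inr h.symm
        · exact Or.inl h.symm
    · rintro ⟨⟨hlt, hdom⟩, hcard⟩
      refine ⟨A.attachFin hlt, ⟨?_, by simp [hcard]⟩, ?_⟩
      · intro v hv
        have hvA : (v : ℕ) ∉ A := by simpa using hv
        obtain ⟨u, hu, hadj⟩ := hdom v v.isLt hvA
        refine ⟨⟨u, hlt u hu⟩, by simp [hu], ?_⟩
        rw [SimpleGraph.pathGraph_adj]
        rcases hadj with h | h
        · right; simpa using h.symm
        · left; simpa using h.symm
      · ext a
        simp only [Finset.mem_map, Fin.valEmbedding_apply]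
        constructor
        · rintro ⟨b, hb, rfl⟩; simpa using hb
        · intro ha; exact ⟨⟨a, hlt a ha⟩, by simpa using ha, rfl⟩
  unfold domCount ndomCount
  rw [← himg, Set.ncard_image_of_injective _ hinj]

lemma sup_id_eq_max' {B : Finset ℕ} (hB : B.Nonempty) : B.sup id = B.max' hB :=
  le_antisymm (Finset.sup_le fun b hb => B.le_max' b hb)
    (Finset.le_sup (f := id) (B.max'_mem hB))

lemma sup_id_mem {B : Finset ℕ} (hB : B.Nonempty) : B.sup id ∈ B := by
  rw [sup_id_eq_max' hB]; exact Finset.max'_mem B hB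

lemma le_sup_id {B : Finset ℕ} {b : ℕ} (hb : b ∈ B) : b ≤ B.sup id :=
  Finset.le_sup (f := id) hb

/-- append a new maximum at distance `k` beyond the current maximum -/
def Phi (k : ℕ) (B : Finset ℕ) : Finset ℕ := insert (B.sup id + k) B

lemma phi_notMem {B : Finset ℕ} {k : ℕ} (hk : 1 ≤ k) : B.sup id + k ∉ B :=
  fun h => absurd (le_sup_id h) (by omega)

lemma phi_sup {B : Finset ℕ} {k : ℕ} (hk : 1 ≤ k) :
    (Phi k B).sup id = B.sup id + k := by
  show (insert (B.sup id + k) B).sup id = B.sup id + k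
  rw [Finset.sup_insert]
  exact sup_eq_left.2 (Nat.le_add_right _ _)

lemma phi_erase {B : Finset ℕ} {k : ℕ} (hk : 1 ≤ k) :
    (Phi k B).erase ((Phi k B).sup id) = B := by
  rw [phi_sup hk]
  exact Finset.erase_insert (phi_notMem hk)

lemma phi_mem {n k i : ℕ} (hn : 4 ≤ n) (hk1 : 1 ≤ k) (hk3 : k ≤ 3) {B : Finset ℕ}
    (hi : 2 ≤ i) (hB : NDom (n - k) B ∧ B.card = i - 1) :
    NDom n (Phi k B) ∧ (Phi k B).card = i := by
  obtain ⟨⟨hlt, hdom⟩, hcard⟩ := hB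
  have hne : B.Nonempty := Finset.card_pos.1 (by omega)
  have hbB : B.sup id ∈ B := sup_id_mem hne
  have hb1 : B.sup id < n - k := hlt _ hbB
  have hb2 : n - k - 2 ≤ B.sup id := by
    by_cases h : (n - k - 1) ∈ B
    · have := le_sup_id h; omega
    · obtain ⟨u, hu, hadj⟩ := hdom (n - k - 1) (by omega) h
      have := hlt u hu
      have := le_sup_id hu
      omega
  have hnotmem : B.sup id + k ∉ B := phi_notMem hk1
  refine ⟨⟨?_, ?_⟩, ?_⟩
  · intro a ha
    rcases Finset.mem_insert.1 ha with rfl | ha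
    · omega
    · have := hlt a ha; omega
  · intro v hv hvA
    have hvM : v ≠ B.sup id + k := fun h => hvA (h ▸ Finset.mem_insert_self _ _)
    have hvB : v ∉ B := fun h => hvA (Finset.mem_insert_of_mem h)
    by_cases hvlt : v < n - k
    · obtain ⟨u, hu, hadj⟩ := hdom v hvlt hvB
      exact ⟨u, Finset.mem_insert_of_mem hu, hadj⟩
    · have hcase : v = B.sup id + k + 1 ∨ v = B.sup id + 1 ∨
        (v = B.sup id + 2 ∧ k = 3) := by omega
      rcases hcase with h | h | ⟨h, hk⟩
      · exact ⟨B.sup id + k, Finset.mem_insert_self _ _, Or.inr (by omega)⟩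
      · exact ⟨B.sup id, Finset.mem_insert_of_mem hbB, Or.inr (by omega)⟩
      · exact ⟨B.sup id + k, Finset.mem_insert_self _ _, Or.inl (by omega)⟩
  · show (insert (B.sup id + k) B).card = i
    rw [Finset.card_insert_of_notMem hnotmem]; omega

lemma exists_phi {n i : ℕ} (hn : 4 ≤ n) (hi : 2 ≤ i) {A : Finset ℕ}
    (hA : NDom n A ∧ A.card = i) :
    ∃ k, 1 ≤ k ∧ k ≤ 3 ∧
      (NDom (n - k) (A.erase (A.sup id)) ∧ (A.erase (A.sup id)).card = i - 1) ∧
      A = Phi k (A.erase (A.sup id)) := by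
  obtain ⟨⟨hlt, hdom⟩, hcard⟩ := hA
  have hAne : A.Nonempty := Finset.card_pos.1 (by omega)
  set M := A.sup id with hMdef
  have hMA : M ∈ A := sup_id_mem hAne
  set B := A.erase M with hBdef
  have hBcard : B.card = i - 1 := by
    rw [hBdef, Finset.card_erase_of_mem hMA]; omega
  have hBne : B.Nonempty := Finset.card_pos.1 (by omega)
  set M' := B.sup id with hM'def
  have hM'B : M' ∈ B := sup_id_mem hBne
  have hM'A : M' ∈ A := Finset.mem_of_mem_erase hM'B
  have hM'ne : M' ≠ M := Finset.ne_of_mem_erase hM'B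
  have hM'lt : M' < M := lt_of_le_of_ne (le_sup_id hM'A) hM'ne
  have hMlt : M < n := hlt M hMA
  have hBle : ∀ b ∈ B, b ≤ M' := fun b hb => le_sup_id hb
  have hMge : n - 2 ≤ M := by
    by_cases h : (n - 1) ∈ A
    · have := le_sup_id h; omega
    · obtain ⟨u, hu, hadj⟩ := hdom (n - 1) (by omega) h
      have h1 := hlt u hu; have h2 := le_sup_id hu; omega
  have hgap : M ≤ M' + 3 := by
    by_contra hg
    push_neg at hg
    have hv : M - 2 ∉ A := by
      intro h
      have hmem : M - 2 ∈ B := Finset.mem_erase.2 ⟨by omega, h⟩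
      have := hBle _ hmem; omega
    obtain ⟨u, hu, hadj⟩ := hdom (M - 2) (by omega) hv
    have huM : u ≤ M := le_sup_id hu
    rcases eq_or_ne u M with rfl | h
    · omega
    · have := hBle u (Finset.mem_erase.2 ⟨h, hu⟩); omega
  refine ⟨M - M', by omega, by omega, ⟨⟨?_, ?_⟩, hBcard⟩, ?_⟩
  · intro a ha
    have := hBle a ha; omega
  · intro v hvlt hvB
    by_cases hvA : v ∈ A
    · have hvM : v = M := by
        by_contra h; exact hvB (Finset.mem_erase.2 ⟨h, hvA⟩)
      exact ⟨M', hM'B, Or.inr (by omega)⟩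
    · obtain ⟨u, hu, hadj⟩ := hdom v (by omega) hvA
      rcases eq_or_ne u M with rfl | hune
      · have hvle : v ≤ M' + 1 := by omega
        have hvM : v + 1 = M := by rcases hadj with h | h <;> omega
        by_cases hMM' : M = M' + 1
        · have hv' : v = M' := by omega
          exact absurd (hv' ▸ hM'A) hvA
        · have hv' : v = M' + 1 := by omega
          exact ⟨M', hM'B, Or.inr (by omega)⟩
      · exact ⟨u, Finset.mem_erase.2 ⟨hune, hu⟩, hadj⟩
  · show A = insert (B.sup id + (M - M')) B
    rw [← hM'def, show M' + (M - M') = M from by omega, hBdef,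
      Finset.insert_erase hMA]

lemma ndom_finite (m j : ℕ) : {A : Finset ℕ | NDom m A ∧ A.card = j}.Finite := by
  apply Set.Finite.subset (Finset.range m).powerset.finite_toSet
  intro A hA
  simp only [Finset.mem_coe, Finset.mem_powerset]
  intro a ha
  exact Finset.mem_range.2 (hA.1.1 a ha)

lemma gap_eq (k : ℕ) (B : Finset ℕ) (hk : 1 ≤ k) :
    (Phi k B).sup id - ((Phi k B).erase ((Phi k B).sup id)).sup id = k := by
  rw [phi_erase hk, phi_sup hk]; omega

lemma phi_injective {k : ℕ} (hk : 1 ≤ k) : Function.Injective (Phi k) := by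
  intro B1 B2 h
  have h2 := congrArg (fun s : Finset ℕ => s.erase (s.sup id)) h
  simpa only [phi_erase hk] using h2

lemma ndom_rec (n i : ℕ) (hn : 4 ≤ n) (hi : 2 ≤ i) :
    ndomCount n i =
      ndomCount (n - 1) (i - 1) + ndomCount (n - 2) (i - 1) +
        ndomCount (n - 3) (i - 1) := by
  classical
  have hunion : {A : Finset ℕ | NDom n A ∧ A.card = i} =
      Phi 1 '' {A | NDom (n - 1) A ∧ A.card = i - 1} ∪
      Phi 2 '' {A | NDom (n - 2) A ∧ A.card = i - 1} ∪
      Phi 3 '' {A | NDom (n - 3) A ∧ A.card = i - 1} := by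
    ext A
    simp only [Set.mem_union, Set.mem_image, Set.mem_setOf_eq]
    constructor
    · intro hA
      obtain ⟨k, hk1, hk3, hB, hphi⟩ := exists_phi hn hi hA
      interval_cases k
      · exact Or.inl (Or.inl ⟨_, hB, hphi.symm⟩)
      · exact Or.inl (Or.inr ⟨_, hB, hphi.symm⟩)
      · exact Or.inr ⟨_, hB, hphi.symm⟩
    · rintro ((⟨B, hB, rfl⟩ | ⟨B, hB, rfl⟩) | ⟨B, hB, rfl⟩)
      · exact phi_mem hn (by norm_num) (by norm_num) hi hB
      · exact phi_mem hn (by norm_num) (by norm_num) hi hB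
      · exact phi_mem hn (by norm_num) (by norm_num) hi hB
  have hdisj : ∀ k k' : ℕ, 1 ≤ k → 1 ≤ k' → k ≠ k' → ∀ s t : Set (Finset ℕ),
      Disjoint (Phi k '' s) (Phi k' '' t) := by
    intro k k' hk hk' hne s t
    rw [Set.disjoint_left]
    rintro A ⟨B1, _, rfl⟩ ⟨B2, _, h⟩
    have h1 := gap_eq k B1 hk
    have h2 := gap_eq k' B2 hk'
    rw [h] at h2
    omega
  have f1 := (ndom_finite (n - 1) (i - 1)).image (Phi 1)
  have f2 := (ndom_finite (n - 2) (i - 1)).image (Phi 2)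
  have f3 := (ndom_finite (n - 3) (i - 1)).image (Phi 3)
  unfold ndomCount
  rw [hunion,
    Set.ncard_union_eq (by
      refine Set.disjoint_union_left.2 ⟨?_, ?_⟩ <;>
        exact hdisj _ _ (by norm_num) (by norm_num) (by norm_num) _ _)
      (f1.union f2) f3,
    Set.ncard_union_eq (hdisj _ _ (by norm_num) (by norm_num) (by norm_num) _ _) f1 f2,
    Set.ncard_image_of_injective _ (phi_injective (by norm_num : (1:ℕ) ≤ 1)),
    Set.ncard_image_of_injective _ (phi_injective (by norm_num : (1:ℕ) ≤ 2)),
    Set.ncard_image_of_injective _ (phi_injective (by norm_num : (1:ℕ) ≤ 3))]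

lemma ndom_count_zero (m : ℕ) (hm : 1 ≤ m) : ndomCount m 0 = 0 := by
  unfold ndomCount
  convert Set.ncard_empty (Finset ℕ)
  ext A
  simp only [Set.mem_setOf_eq, Set.mem_empty_iff_false, iff_false, not_and]
  intro hA hcard
  rw [Finset.card_eq_zero] at hcard
  subst hcard
  obtain ⟨u, hu, -⟩ := hA.2 0 (by omega) (Finset.notMem_empty 0)
  exact Finset.notMem_empty u hu

lemma ndom_count_one (n : ℕ) (hn : 4 ≤ n) : ndomCount n 1 = 0 := by
  unfold ndomCount
  convert Set.ncard_empty (Finset ℕ)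
  ext A
  simp only [Set.mem_setOf_eq, Set.mem_empty_iff_false, iff_false, not_and]
  intro hA hcard
  obtain ⟨a, rfl⟩ := Finset.card_eq_one.1 hcard
  by_cases ha : 2 ≤ a
  · obtain ⟨u, hu, hadj⟩ := hA.2 0 (by omega) (by simp; omega)
    rw [Finset.mem_singleton] at hu
    omega
  · obtain ⟨u, hu, hadj⟩ := hA.2 3 (by omega) (by simp; omega)
    rw [Finset.mem_singleton] at hu
    omega

theorem domCount_path_recurrence (n i : ℕ) (hn : 4 ≤ n) (hi : 1 ≤ i) :
    domCount (SimpleGraph.pathGraph n) i =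
      domCount (SimpleGraph.pathGraph (n - 1)) (i - 1) +
      domCount (SimpleGraph.pathGraph (n - 2)) (i - 1) +
      domCount (SimpleGraph.pathGraph (n - 3)) (i - 1) := by
  rw [domCount_eq_ndomCount, domCount_eq_ndomCount, domCount_eq_ndomCount,
    domCount_eq_ndomCount]
  rcases eq_or_lt_of_le hi with h1 | h2
  · rw [← h1]
    simp only [Nat.sub_self]
    rw [ndom_count_one n hn, ndom_count_zero (n - 1) (by omega),
      ndom_count_zero (n - 2) (by omega), ndom_count_zero (n - 3) (by omega)]
  · exact ndom_rec n i hn h2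
end

section
/- For every n ≥ 1 and every k with 1 ≤ k ≤ n, the number of dominating sets of the path P_n of cardinality k equals d(P_n, k) = Σ_{m=0}^{⌊(n−k)/2⌋+1} C(k−1, n−k−m) · C(n−k−m+2, m), where C(a, b) denotes the binomial coefficient (taken to be 0 when b < 0 or b > a). -/
open Finset

/-- Binomial coefficient `C(a, b)` for integer arguments, taken to be `0` when
`b < 0` or `b > a` (in particular when `a < 0`). -/
def chooseZ (a b : ℤ) : ℤ :=
  if 0 ≤ a ∧ 0 ≤ b then (a.toNat).choose b.toNat else 0

/-!
A `k`-subset of the path `0 — 1 — ⋯ — (n-1)` is determined by its gap vector `(g₀, …, g_k)`: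
`g₀` unchosen vertices before the first chosen one, `g_r` between the `r`-th and the `(r+1)`-st,
and `g_k` after the last. Gap vectors are the solutions of `g₀ + ⋯ + g_k = n - k` in natural
numbers, and by stars and bars there are exactly `C(n, k)` of them, so the encoding is a bijection.
The set dominates exactly when the end gaps are at most `1` and the inner gaps at most `2`, so
`d(P_n, k)` is the coefficient of `X^(n-k)` in `(1 + X)² (1 + X + X²)^(k-1)`. Expanding
`(1 + X(1 + X))^(k-1)` by the binomial theorem gives the formula.
-/

open Polynomial

theorem chooseZ_natCast (a b : ℕ) : chooseZ a b = a.choose b := by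
  simp [chooseZ]

theorem chooseZ_of_neg_right {a b : ℤ} (hb : b < 0) : chooseZ a b = 0 := by
  rw [chooseZ, if_neg (by omega)]

theorem chooseZ_of_lt {a b : ℤ} (hab : a < b) : chooseZ a b = 0 := by
  unfold chooseZ
  split_ifs
  · rw [Nat.choose_eq_zero_of_lt (by omega), Nat.cast_zero]
  · rfl

theorem Nat.exists_le_and_lt_succ {f : ℕ → ℕ} {x N : ℕ} (h0 : f 0 ≤ x) (hN : x < f (N + 1)) :
    ∃ r ≤ N, f r ≤ x ∧ x < f (r + 1) := by
  classical
  have hex : ∃ r, x < f (r + 1) := ⟨N, hN⟩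
  refine ⟨Nat.find hex, Nat.find_min' hex hN, ?_, Nat.find_spec hex⟩
  rcases h : Nat.find hex with _ | r
  · exact h0
  · exact not_lt.1 (Nat.find_min hex (h ▸ Nat.lt_succ_self r))

theorem ncard_setOf_sum_eq {ι : Type*} [Fintype ι] [DecidableEq ι] (s : ℕ) :
    {g : ι → ℕ | ∑ i, g i = s}.ncard = (Fintype.card ι + s - 1).choose s := by
  rw [← Nat.card_coe_set_eq, Set.coe_ofPred, ← Nat.card_congr (Sym.equivNatSumOfFintype ι s),
    Nat.card_eq_fintype_card, Sym.card_sym_eq_choose]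

theorem card_filter_piFinset_sum_eq_coeff {ι R : Type*} [Fintype ι] [DecidableEq ι]
    [CommSemiring R] (b : ι → ℕ) (s : ℕ) :
    (#{g ∈ Fintype.piFinset fun i ↦ range (b i + 1) | ∑ i, g i = s} : R) =
      (∏ i, ∑ a ∈ range (b i + 1), (X : R[X]) ^ a).coeff s := by
  simp_rw [prod_univ_sum, prod_pow_eq_pow_sum, finsetSum_coeff, coeff_X_pow, sum_boole, eq_comm]

theorem coeff_one_add_X_sq_mul_pow (j s : ℕ) :
    ((1 + X) ^ 2 * (1 + X + X ^ 2) ^ j : ℤ[X]).coeff s =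
      ∑ i ∈ range (s + 1), (j.choose i * (i + 2).choose (s - i) : ℤ) := by
  set G : ℕ → ℤ := fun i ↦ j.choose i * if i ≤ s then ((i + 2).choose (s - i) : ℤ) else 0
  have hexpand : (1 + X) ^ 2 * (1 + X + X ^ 2) ^ j =
      ∑ i ∈ range (j + 1), (j.choose i : ℤ[X]) * (X ^ i * (1 + X) ^ (i + 2)) := by
    rw [show (1 + X + X ^ 2 : ℤ[X]) = X * (1 + X) + 1 by ring, add_pow (X * (1 + X)) 1, mul_sum]
    refine sum_congr rfl fun i _ ↦ ?_
    rw [one_pow, mul_one, mul_pow]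
    ring
  have hcoeff : ((1 + X) ^ 2 * (1 + X + X ^ 2) ^ j : ℤ[X]).coeff s = ∑ i ∈ range (j + 1), G i := by
    simp only [hexpand, finsetSum_coeff, coeff_natCast_mul, coeff_X_pow_mul', coeff_one_add_X_pow,
      G]
  have hG : ∑ i ∈ range (j + 1), G i = ∑ i ∈ range (s + 1), G i := by
    rw [← eventually_constant_sum (n := j + s + 1),
      ← eventually_constant_sum (N := s + 1) (n := j + s + 1)]
    · intro i hi
      simp [G, show ¬ i ≤ s by omega]
    · omega
    · intro i hi
      simp [G, Nat.choose_eq_zero_of_lt (show j < i by omega)]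
    · omega
  rw [hcoeff, hG]
  refine sum_congr rfl fun i hi ↦ ?_
  simp [G, Nat.lt_succ_iff.1 (mem_range.1 hi)]

theorem sum_chooseZ_eq_sum_choose (j s : ℕ) :
    ∑ m ∈ range (s / 2 + 2), chooseZ j ((s : ℤ) - m) * chooseZ ((s : ℤ) - m + 2) m =
      ∑ i ∈ range (s + 1), (j.choose i * (i + 2).choose (s - i) : ℤ) := by
  have hzero (m : ℕ) (hm : s < m ∨ s + 2 < 2 * m) :
      chooseZ j ((s : ℤ) - m) * chooseZ ((s : ℤ) - m + 2) m = 0 := by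
    rcases hm with hm | hm
    · rw [chooseZ_of_neg_right (b := (s : ℤ) - m) (by omega), zero_mul]
    · rw [chooseZ_of_lt (a := (s : ℤ) - m + 2) (by omega), mul_zero]
  rw [← eventually_constant_sum (fun m hm ↦ hzero m (by omega)) (by omega : s / 2 + 2 ≤ 2 * s + 2),
    eventually_constant_sum (fun m hm ↦ hzero m (by omega)) (by omega : s + 1 ≤ 2 * s + 2),
    ← sum_range_reflect]
  refine sum_congr rfl fun i hi ↦ ?_
  have his : i ≤ s := Nat.lt_succ_iff.1 (mem_range.1 hi)
  rw [show (s : ℤ) - ((s + 1 - 1 - i : ℕ) : ℤ) = i by omega,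
    show ((s + 1 - 1 - i : ℕ) : ℤ) = (s - i : ℕ) by omega,
    show (i : ℤ) + 2 = (i + 2 : ℕ) by push_cast; ring, chooseZ_natCast, chooseZ_natCast]

def gapBound (k r : ℕ) : ℕ := if r = 0 ∨ r = k then 1 else 2

theorem prod_sum_range_gapBound {R : Type*} [CommSemiring R] (j : ℕ) :
    ∏ i : Fin (j + 2), ∑ a ∈ range (gapBound (j + 1) i + 1), (X : R[X]) ^ a =
      (1 + X) ^ 2 * (1 + X + X ^ 2) ^ j := by
  have hinterior (i : Fin j) : gapBound (j + 1) i.castSucc.succ = 2 := by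
    simp [gapBound]; omega
  rw [Fin.prod_univ_succ, Fin.prod_univ_castSucc]
  simp only [hinterior, prod_const, card_univ, Fintype.card_fin]
  simp [gapBound, sum_range_succ]
  ring

section GapVector

variable {k : ℕ} (g : Fin (k + 1) → ℕ)

def gapSeq (r : ℕ) : ℕ := if h : r < k + 1 then g ⟨r, h⟩ else 0

def gapStart (r : ℕ) : ℕ := r + ∑ j ∈ range r, gapSeq g j

/-- Gap `r` occupies `[gapStart g r, gapStart g r + g r)`; for `r < k` the vertex right after it is
chosen. -/
def gapSet : Finset ℕ := univ.image fun i : Fin k ↦ gapStart g i + gapSeq g i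

variable {g}

theorem gapSeq_val (i : Fin (k + 1)) : gapSeq g i = g i := dif_pos i.isLt

theorem gapSeq_le_gapBound (hg : ∀ i, g i ≤ gapBound k i) (r : ℕ) :
    gapSeq g r ≤ gapBound k r := by
  unfold gapSeq
  split_ifs with h
  · exact hg ⟨r, h⟩
  · exact Nat.zero_le _

@[simp] theorem gapStart_zero : gapStart g 0 = 0 := by simp [gapStart]

theorem gapStart_succ (r : ℕ) : gapStart g (r + 1) = gapStart g r + gapSeq g r + 1 := by
  simp only [gapStart, sum_range_succ]
  ring

theorem gapStart_strictMono : StrictMono (gapStart g) :=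
  strictMono_nat_of_lt_succ fun r ↦ by rw [gapStart_succ]; omega

theorem gapStart_add_gapSeq_last : gapStart g k + gapSeq g k = k + ∑ i, g i := by
  have h : gapStart g (k + 1) = k + 1 + ∑ i, g i := by
    simp only [gapStart, ← Fin.sum_univ_eq_sum_range, gapSeq_val]
  rw [gapStart_succ] at h
  omega

theorem mem_gapSet {x : ℕ} : x ∈ gapSet g ↔ ∃ i < k, gapStart g i + gapSeq g i = x := by
  simp [gapSet, Fin.exists_iff]

theorem notMem_gapSet {r x : ℕ} (h₁ : gapStart g r ≤ x) (h₂ : x < gapStart g r + gapSeq g r) :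
    x ∉ gapSet g := by
  rw [mem_gapSet]
  rintro ⟨i, -, rfl⟩
  have hi := gapStart_succ (g := g) i
  rcases lt_or_ge i r with hir | hri
  · have := gapStart_strictMono.monotone (f := gapStart g) (show i + 1 ≤ r by omega)
    omega
  · have := gapStart_strictMono.monotone (f := gapStart g) (show r + 1 ≤ i + 1 by omega)
    rw [gapStart_succ] at this
    omega

theorem strictMono_gapStart_add_gapSeq : StrictMono fun i : Fin k ↦ gapStart g i + gapSeq g i :=
  fun i i' hii' ↦ by
    have := gapStart_strictMono.monotone (f := gapStart g) (show (i : ℕ) + 1 ≤ i' from hii')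
    rw [gapStart_succ] at this
    dsimp only
    omega

theorem card_gapSet : #(gapSet g) = k := by
  rw [gapSet, card_image_of_injective _ strictMono_gapStart_add_gapSeq.injective, card_univ,
    Fintype.card_fin]

theorem gapSet_subset_range : gapSet g ⊆ range (k + ∑ i, g i) := by
  intro x hx
  obtain ⟨i, hik, rfl⟩ := mem_gapSet.1 hx
  have hmono := gapStart_strictMono.monotone (f := gapStart g) (show i + 1 ≤ k by omega)
  have := gapStart_add_gapSeq_last (g := g)
  rw [gapStart_succ] at hmono
  rw [mem_range]
  omega

theorem gapSet_injOn (s : ℕ) : Set.InjOn gapSet {g : Fin (k + 1) → ℕ | ∑ i, g i = s} := by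
  intro g (hg : ∑ i, g i = s) g' (hg' : ∑ i, g' i = s) h
  have helem := congrFun ((strictMono_gapStart_add_gapSeq.range_inj
    strictMono_gapStart_add_gapSeq).1 (by
      simpa [gapSet, Set.image_univ] using congrArg ((↑) : Finset ℕ → Set ℕ) h))
  have hstart : ∀ r ≤ k, gapStart g r = gapStart g' r := by
    rintro (_ | r) hr
    · simp
    · have := helem ⟨r, hr⟩
      simp only [gapStart_succ] at this ⊢
      omega
  funext i
  rw [← gapSeq_val (g := g), ← gapSeq_val (g := g')]
  rcases Nat.lt_or_ge i k with hik | hik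
  · have := hstart (i + 1) hik
    simp only [gapStart_succ, hstart i hik.le] at this
    omega
  · have hlast : gapStart g k + gapSeq g k = k + s := hg ▸ gapStart_add_gapSeq_last
    have hlast' : gapStart g' k + gapSeq g' k = k + s := hg' ▸ gapStart_add_gapSeq_last
    rw [show (i : ℕ) = k by omega]
    have := hstart k le_rfl
    omega

/-- Stars and bars: both sides have `(k + s).choose k` elements. -/
theorem image_gapSet (k s : ℕ) :
    gapSet '' {g : Fin (k + 1) → ℕ | ∑ i, g i = s} =
      {T : Finset ℕ | T ⊆ range (k + s) ∧ #T = k} := by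
  have hcodomain : {T : Finset ℕ | T ⊆ range (k + s) ∧ #T = k} =
      ↑(powersetCard k (range (k + s))) := by
    ext
    simp [mem_powersetCard]
  have hsub : gapSet '' {g : Fin (k + 1) → ℕ | ∑ i, g i = s} ⊆
      {T | T ⊆ range (k + s) ∧ #T = k} := by
    rintro _ ⟨g, hg, rfl⟩
    exact ⟨Set.mem_ofPred.1 hg ▸ gapSet_subset_range, card_gapSet⟩
  refine Set.eq_of_subset_of_ncard_le hsub ?_ (hcodomain ▸ finite_toSet _)
  rw [(gapSet_injOn s).ncard_image, hcodomain, Set.ncard_coe_finset, card_powersetCard,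
    card_range, ncard_setOf_sum_eq, Fintype.card_fin, show k + 1 + s - 1 = k + s by omega,
    Nat.choose_symm_add]

end GapVector

def PathDominates (n : ℕ) (T : Finset ℕ) : Prop :=
  ∀ v < n, v ∉ T → ∃ u ∈ T, u + 1 = v ∨ v + 1 = u

theorem isDominatingSet_pathGraph_iff {n : ℕ} (S : Finset (Fin n)) :
    IsDominatingSet (SimpleGraph.pathGraph n) S ↔ PathDominates n (S.map Fin.valEmbedding) := by
  simp only [IsDominatingSet, PathDominates, SimpleGraph.pathGraph_adj, mem_map,
    Fin.valEmbedding_apply]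
  constructor
  · rintro h v hv hvS
    obtain ⟨u, hu, hadj⟩ := h ⟨v, hv⟩ fun h ↦ hvS ⟨_, h, rfl⟩
    exact ⟨u, ⟨u, hu, rfl⟩, hadj⟩
  · rintro h v hvS
    obtain ⟨_, ⟨u, hu, rfl⟩, hadj⟩ := h v v.isLt fun ⟨w, hw, hwv⟩ ↦ hvS (Fin.ext hwv ▸ hw)
    exact ⟨u, hu, hadj⟩

theorem domCount_pathGraph_eq_ncard (n k : ℕ) :
    domCount (SimpleGraph.pathGraph n) k =
      {T : Finset ℕ | T ⊆ range n ∧ #T = k ∧ PathDominates n T}.ncard := by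
  rw [domCount, ← (map_injective Fin.valEmbedding).injOn.ncard_image]
  congr 1
  ext T
  constructor
  · rintro ⟨S, ⟨hS, hcard⟩, rfl⟩
    refine ⟨fun x hx ↦ ?_, by rw [card_map, hcard], (isDominatingSet_pathGraph_iff S).1 hS⟩
    obtain ⟨v, -, rfl⟩ := mem_map.1 hx
    exact mem_range.2 v.isLt
  · rintro ⟨hT, hcard, hdom⟩
    have hlt : ∀ m ∈ T, m < n := fun m hm ↦ mem_range.1 (hT hm)
    refine ⟨T.attachFin hlt, ⟨?_, by rw [card_attachFin, hcard]⟩, map_valEmbedding_attachFin hlt⟩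
    rwa [isDominatingSet_pathGraph_iff, map_valEmbedding_attachFin]

section GapDomination

variable {k s : ℕ} {g : Fin (k + 1) → ℕ}

theorem le_gapBound_of_pathDominates (hg : ∑ i, g i = s) (hdom : PathDominates (k + s) (gapSet g))
    (i : Fin (k + 1)) : g i ≤ gapBound k i := by
  have hlast := hg ▸ gapStart_add_gapSeq_last (g := g)
  rw [← gapSeq_val (g := g)]
  obtain ⟨r, hr⟩ := i
  dsimp only
  have hrs : gapStart g r + gapSeq g r ≤ k + s := by
    have := gapStart_strictMono.monotone (f := gapStart g) (show r + 1 ≤ k + 1 by omega)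
    rw [gapStart_succ, gapStart_succ] at this
    omega
  by_contra hbig
  have hundominated (v : ℕ) (hv : v < k + s) (h₁ : gapStart g r ≤ v)
      (h₂ : v < gapStart g r + gapSeq g r) (hleft : v = 0 ∨ gapStart g r < v)
      (hright : v + 1 = k + s ∨ v + 1 < gapStart g r + gapSeq g r) : False := by
    obtain ⟨u, hu, hadj⟩ := hdom v hv (notMem_gapSet h₁ h₂)
    have := mem_range.1 (hg ▸ gapSet_subset_range hu)
    exact notMem_gapSet (r := r) (by omega) (by omega) hu
  simp only [gapBound] at hbig
  split_ifs at hbig with hend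
  · rcases hend with rfl | rfl
    · simp only [gapStart_zero] at *
      exact hundominated 0 (by omega) le_rfl (by omega) (by simp) (by omega)
    · exact hundominated (gapStart g r + gapSeq g r - 1) (by omega) (by omega) (by omega)
        (by omega) (by omega)
  · exact hundominated (gapStart g r + 1) (by omega) (by omega) (by omega) (by omega) (by omega)

theorem pathDominates_gapSet (hk : 1 ≤ k) (hg : ∑ i, g i = s)
    (hb : ∀ i, g i ≤ gapBound k i) : PathDominates (k + s) (gapSet g) := by
  have hlast := hg ▸ gapStart_add_gapSeq_last (g := g)
  have hmem (r : ℕ) (hr : r < k) : gapStart g r + gapSeq g r ∈ gapSet g :=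
    mem_gapSet.2 ⟨r, hr, rfl⟩
  intro v hv hvS
  obtain ⟨r, hrk, hr₁, hr₂⟩ := Nat.exists_le_and_lt_succ (f := gapStart g)
    (by simp) (show v < gapStart g (k + 1) by rw [gapStart_succ]; omega)
  rw [gapStart_succ] at hr₂
  have hbr := gapSeq_le_gapBound hb r
  simp only [gapBound] at hbr
  by_cases hfirst : 1 ≤ r ∧ v = gapStart g r
  · obtain ⟨r, rfl⟩ : ∃ r', r = r' + 1 := ⟨r - 1, by omega⟩
    refine ⟨_, hmem r (by omega), Or.inl ?_⟩
    rw [gapStart_succ] at hfirst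
    omega
  · have hrk : r < k := by
      by_contra hrk
      obtain rfl : r = k := by omega
      simp at hbr
      omega
    have hvr : v ≠ gapStart g r + gapSeq g r := fun h ↦ hvS (h ▸ hmem r hrk)
    refine ⟨_, hmem r hrk, Or.inr ?_⟩
    split_ifs at hbr <;> omega

end GapDomination

theorem domCount_pathGraph_eq_card {k : ℕ} (hk : 1 ≤ k) (s : ℕ) :
    domCount (SimpleGraph.pathGraph (k + s)) k =
      #{g ∈ Fintype.piFinset fun i : Fin (k + 1) ↦ range (gapBound k i + 1) | ∑ i, g i = s} := by
  have hset : {T : Finset ℕ | T ⊆ range (k + s) ∧ #T = k ∧ PathDominates (k + s) T} =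
      gapSet '' {g : Fin (k + 1) → ℕ | (∀ i, g i ≤ gapBound k i) ∧ ∑ i, g i = s} := by
    ext T
    have hT := Set.ext_iff.1 (image_gapSet k s) T
    simp only [Set.mem_image, Set.mem_ofPred] at hT ⊢
    constructor
    · rintro ⟨hsub, hcard, hdom⟩
      obtain ⟨g, hg, rfl⟩ := hT.2 ⟨hsub, hcard⟩
      exact ⟨g, ⟨le_gapBound_of_pathDominates hg hdom, hg⟩, rfl⟩
    · rintro ⟨g, ⟨hb, hg⟩, rfl⟩
      exact ⟨hg ▸ gapSet_subset_range, card_gapSet, pathDominates_gapSet hk hg hb⟩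
  rw [domCount_pathGraph_eq_ncard, hset, ((gapSet_injOn s).mono fun g hg ↦ hg.2).ncard_image,
    ← Set.ncard_coe_finset]
  congr 1
  ext g
  simp

theorem domCount_path_formula_general (n k : ℕ) (hk1 : 1 ≤ k) (hk2 : k ≤ n) :
    (domCount (SimpleGraph.pathGraph n) k : ℤ) =
      ∑ m ∈ Finset.range ((n - k) / 2 + 2),
        chooseZ ((k : ℤ) - 1) ((n : ℤ) - k - m) *
          chooseZ ((n : ℤ) - k - m + 2) m := by
  obtain ⟨s, rfl⟩ := Nat.exists_eq_add_of_le hk2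
  obtain ⟨j, rfl⟩ := Nat.exists_eq_add_of_le' hk1
  rw [domCount_pathGraph_eq_card hk1, card_filter_piFinset_sum_eq_coeff, prod_sum_range_gapBound,
    coeff_one_add_X_sq_mul_pow]
  push_cast
  simp only [add_tsub_cancel_left, add_sub_cancel_right, sum_chooseZ_eq_sum_choose]

theorem domCount_path_formula (n k : ℕ) (hn : 1 ≤ n) (hk1 : 1 ≤ k) (hk2 : k ≤ n) :
    (domCount (SimpleGraph.pathGraph n) k : ℤ) =
      ∑ m ∈ Finset.range ((n - k) / 2 + 2),
        chooseZ ((k : ℤ) - 1) ((n : ℤ) - k - m) *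
          chooseZ ((n : ℤ) - k - m + 2) m :=
  domCount_path_formula_general n k hk1 hk2
end

section
/- For every n ≥ 3, the isolate domination numbers of the path and cycle on n vertices satisfy γ_0(P_n) = γ_0(C_n) = ⌈n/3⌉. -/
open Finset

/-!
A vertex of a graph of maximum degree 2 dominates at most three vertices, so every dominating
set of `C_n` has at least `n / 3` vertices, and so has every dominating set of `P_n ≤ C_n`.
Conversely, the vertices `1, 4, 7, …` of `P_n` (the last one moved to the endpoint if
necessary) dominate `P_n`, hence `C_n`, and vertex `1` has no chosen neighbour in `C_n`, hence
none in `P_n`.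
-/

namespace Nat

theorem ceil_natCast_div_natCast {α : Type*} [Field α] [LinearOrder α] [IsStrictOrderedRing α]
    [FloorSemiring α] (n : ℕ) {d : ℕ} (hd : 0 < d) :
    ⌈(n : α) / d⌉₊ = (n + d - 1) / d := by
  have hd' : (0 : α) < d := Nat.cast_pos.mpr hd
  apply le_antisymm
  · rw [Nat.ceil_le, div_le_iff₀ hd']
    have hlt := Nat.lt_div_mul_add (a := n + d - 1) hd
    exact_mod_cast (by omega : n ≤ (n + d - 1) / d * d)
  · have h : (n : α) ≤ ⌈(n : α) / d⌉₊ * d := (div_le_iff₀ hd').mp (Nat.le_ceil _)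
    have h' : n ≤ ⌈(n : α) / d⌉₊ * d := by exact_mod_cast h
    exact Nat.le_of_lt_succ <| (Nat.div_lt_iff_lt_mul hd).mpr (by rw [Nat.succ_mul]; omega)

end Nat

section Domination

variable {V : Type*} {G H : SimpleGraph V} {S : Finset V}

theorem IsDominatingSet.mono (hGH : G ≤ H) (hS : IsDominatingSet G S) : IsDominatingSet H S :=
  fun v hv => (hS v hv).imp fun _ ⟨hu, huv⟩ => ⟨hu, hGH huv⟩

theorem IsDominatingSet.card_le_mul_card [Fintype V] [DecidableEq V] [DecidableRel G.Adj]
    (hS : IsDominatingSet G S) : Fintype.card V ≤ (G.maxDegree + 1) * #S := by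
  have hcover : (univ : Finset V) ⊆ S.biUnion fun u => insert u (G.neighborFinset u) := by
    intro v _
    rw [mem_biUnion]
    by_cases hv : v ∈ S
    · exact ⟨v, hv, mem_insert_self v _⟩
    · obtain ⟨u, hu, huv⟩ := hS v hv
      exact ⟨u, hu, mem_insert_of_mem ((G.mem_neighborFinset u v).mpr huv)⟩
  calc Fintype.card V = #(univ : Finset V) := (card_univ).symm
    _ ≤ #(S.biUnion fun u => insert u (G.neighborFinset u)) := card_le_card hcover
    _ ≤ ∑ u ∈ S, #(insert u (G.neighborFinset u)) := card_biUnion_le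
    _ ≤ ∑ _u ∈ S, (G.maxDegree + 1) := sum_le_sum fun u _ =>
        (card_insert_le _ _).trans (Nat.succ_le_succ (G.degree_le_maxDegree u))
    _ = (G.maxDegree + 1) * #S := by rw [sum_const, smul_eq_mul, mul_comm]

theorem isoDomNumber_eq_card [Fintype V] (hS : IsIsolateDominatingSet G S)
    (hmin : ∀ T, IsDominatingSet G T → #S ≤ #T) : isoDomNumber G = #S := by
  have hmem : #S ∈ {k | ∃ T : Finset V, IsIsolateDominatingSet G T ∧ #T = k} := ⟨S, hS, rfl⟩
  refine le_antisymm (Nat.sInf_le hmem) (le_csInf ⟨_, hmem⟩ ?_)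
  rintro k ⟨T, hT, rfl⟩
  exact hmin T hT.1

end Domination

namespace SimpleGraph

theorem maxDegree_cycleGraph (n : ℕ) : (cycleGraph (n + 3)).maxDegree = 2 := by
  refine le_antisymm
    (maxDegree_le_of_forall_degree_le _ _ fun _ => cycleGraph_degree_three_le.le) ?_
  exact cycleGraph_degree_three_le (v := 0) ▸ degree_le_maxDegree _ _

end SimpleGraph

def pathIsoDomSet (n : ℕ) : Finset (Fin (n + 1)) :=
  (range ((n + 3) / 3)).image fun k => ⟨min (3 * k + 1) n, by omega⟩

theorem mem_pathIsoDomSet {n : ℕ} {v : Fin (n + 1)} :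
    v ∈ pathIsoDomSet n ↔ ∃ k < (n + 3) / 3, v.val = min (3 * k + 1) n := by
  simp only [pathIsoDomSet, mem_image, mem_range, Fin.ext_iff, eq_comm (b := v.val)]

theorem card_pathIsoDomSet (n : ℕ) : #(pathIsoDomSet n) = (n + 3) / 3 := by
  rw [pathIsoDomSet, card_image_of_injOn, card_range]
  intro a ha b hb hab
  simp only [coe_range, Set.mem_Iio, Fin.mk.injEq] at ha hb hab
  omega

theorem isDominatingSet_pathIsoDomSet (n : ℕ) :
    IsDominatingSet (SimpleGraph.pathGraph (n + 1)) (pathIsoDomSet n) := by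
  intro v hv
  have hk : v.val / 3 < (n + 3) / 3 := by omega
  refine ⟨⟨min (3 * (v.val / 3) + 1) n, by omega⟩, mem_pathIsoDomSet.mpr ⟨_, hk, rfl⟩, ?_⟩
  have hne : min (3 * (v.val / 3) + 1) n ≠ v.val :=
    fun h => hv (mem_pathIsoDomSet.mpr ⟨_, hk, h.symm⟩)
  rw [SimpleGraph.pathGraph_adj, Fin.val_mk]
  omega

theorem one_mem_pathIsoDomSet (n : ℕ) : (1 : Fin (n + 2)) ∈ pathIsoDomSet (n + 1) :=
  mem_pathIsoDomSet.mpr ⟨0, by omega, by simp⟩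

theorem not_cycleGraph_adj_one_of_mem_pathIsoDomSet (n : ℕ) :
    ∀ u ∈ pathIsoDomSet (n + 2), ¬ (SimpleGraph.cycleGraph (n + 3)).Adj 1 u := by
  intro u hu
  have h2 : ((1 + 1 : Fin (n + 3)) : ℕ) = 2 := by simp [Fin.val_add]
  rw [← SimpleGraph.mem_neighborFinset, SimpleGraph.cycleGraph_neighborFinset, mem_insert,
    mem_singleton, sub_self, Fin.ext_iff, Fin.ext_iff, h2, Fin.val_zero]
  obtain ⟨k, hk, hu⟩ := mem_pathIsoDomSet.mp hu
  omega

theorem isoDomNumber_path_cycle (n : ℕ) (hn : 3 ≤ n) :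
    isoDomNumber (SimpleGraph.pathGraph n) = ⌈(n : ℚ) / 3⌉₊ ∧
    isoDomNumber (SimpleGraph.cycleGraph n) = ⌈(n : ℚ) / 3⌉₊ := by
  obtain ⟨n, rfl⟩ : ∃ m, n = m + 3 := ⟨n - 3, by omega⟩
  have hcard : #(pathIsoDomSet (n + 2)) = ⌈((n + 3 : ℕ) : ℚ) / 3⌉₊ := by
    have h := Nat.ceil_natCast_div_natCast (α := ℚ) (n + 3) three_pos
    rw [Nat.cast_ofNat] at h
    rw [card_pathIsoDomSet, h]
    omega
  have hdom := isDominatingSet_pathIsoDomSet (n + 2)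
  have hiso := not_cycleGraph_adj_one_of_mem_pathIsoDomSet n
  have hmin (T : Finset (Fin (n + 3))) (hT : IsDominatingSet (SimpleGraph.cycleGraph (n + 3)) T) :
      #(pathIsoDomSet (n + 2)) ≤ #T := by
    have hbound := hT.card_le_mul_card
    rw [SimpleGraph.maxDegree_cycleGraph, Fintype.card_fin] at hbound
    rw [card_pathIsoDomSet]
    omega
  rw [← hcard]
  have hle := @SimpleGraph.pathGraph_le_cycleGraph (n + 3)
  exact ⟨isoDomNumber_eq_card
      ⟨hdom, 1, one_mem_pathIsoDomSet _, fun u hu h => hiso u hu (hle h)⟩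
      fun T hT => hmin T (hT.mono hle),
    isoDomNumber_eq_card ⟨hdom.mono hle, 1, one_mem_pathIsoDomSet _, hiso⟩ hmin⟩
end

section
/- Let n be a natural number with n ≥ 2 and let i be a natural number with 0 ≤ i ≤ n − 2. Then the centipede graph P_n ∘ K_1 satisfies d_0(P_n ∘ K_1, n + i) = Σ_{k=1}^{n−i} C(n, i+k) · C(i+k, i), where C(a, b) denotes the binomial coefficient. -/
/-!
A set `S` dominates `G ∘ K₁` iff it meets every pair `{v, v'}`, and when `G` has no isolated
vertex an isolated vertex of `S` can be chosen to be a pendant `v'` with `v ∉ S`. If `S` meets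
every pair and has `n + i` elements, it is determined by its pendant part `R` together with the
`i`-set `B ⊆ R` of vertices both of whose copies lie in `S`, and `S` contains a pendant `v'` with
`v ∉ S` exactly when `B ⊊ R`. Counting pairs `B ⊆ R` with `|B| = i < |R| = i + k` gives the sum.
-/

open Finset

/-- The corona `G ∘ K₁`: to each vertex `v` of `G` attach a new pendant vertex `v'`. -/
def coronaK1 {V : Type*} (G : SimpleGraph V) : SimpleGraph (V ⊕ V) where
  Adj v w :=
    match v, w with
    | Sum.inl a, Sum.inl b => G.Adj a b
    | Sum.inl a, Sum.inr b => a = b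
    | Sum.inr a, Sum.inl b => a = b
    | Sum.inr _, Sum.inr _ => False
  symm := by
    constructor
    rintro (a | a) (b | b) h <;> simp_all
    · exact G.adj_symm h
  loopless := by
    constructor
    rintro (a | a) h <;> simp_all

open Sum

section Corona

variable {V : Type*} {G : SimpleGraph V} {S : Finset (V ⊕ V)}

@[simp] lemma coronaK1_adj_inl_inr (a b : V) :
    (coronaK1 G).Adj (inl a) (inr b) ↔ a = b := Iff.rfl

@[simp] lemma coronaK1_adj_inr_inl (a b : V) :
    (coronaK1 G).Adj (inr a) (inl b) ↔ a = b := Iff.rfl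

@[simp] lemma coronaK1_not_adj_inr_inr (a b : V) :
    ¬ (coronaK1 G).Adj (inr a) (inr b) := id

lemma isDominatingSet_coronaK1_iff :
    IsDominatingSet (coronaK1 G) S ↔ ∀ v, inl v ∈ S ∨ inr v ∈ S := by
  constructor
  · intro hS v
    refine or_iff_not_imp_right.2 fun hv ↦ ?_
    obtain ⟨u | u, hu, hadj⟩ := hS _ hv
    · rwa [(coronaK1_adj_inl_inr _ _).1 hadj] at hu
    · exact (coronaK1_not_adj_inr_inr _ _ hadj).elim
  · rintro hS (v | v) hv
    · exact ⟨inr v, (hS v).resolve_left hv, rfl⟩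
    · exact ⟨inl v, (hS v).resolve_right hv, rfl⟩

/-- If `inl v` is isolated in `S`, then for a neighbour `w` of `v` also `inl w ∉ S`, so
domination forces `inr w ∈ S`, and this pendant vertex is isolated. -/
lemma isIsolateDominatingSet_coronaK1_iff (hG : ∀ v, ¬ G.IsIsolated v) :
    IsIsolateDominatingSet (coronaK1 G) S ↔
      (∀ v, inl v ∈ S ∨ inr v ∈ S) ∧ ∃ v, inr v ∈ S ∧ inl v ∉ S := by
  rw [IsIsolateDominatingSet, isDominatingSet_coronaK1_iff]
  refine and_congr_right fun hcover ↦ ⟨?_, ?_⟩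
  · rintro ⟨v | v, hv, hiso⟩
    · obtain ⟨w, hvw⟩ := not_forall_not.1 (hG v)
      have hw : inl w ∉ S := fun hw ↦ hiso _ hw hvw
      exact ⟨w, (hcover w).resolve_left hw, hw⟩
    · exact ⟨v, hv, fun h ↦ hiso _ h rfl⟩
  · rintro ⟨v, hv, hlv⟩
    refine ⟨inr v, hv, ?_⟩
    rintro (w | w) hw hadj
    · exact hlv ((coronaK1_adj_inr_inl _ _).1 hadj ▸ hw)
    · exact coronaK1_not_adj_inr_inr _ _ hadj

end Corona

section Counting

variable {V : Type*} [Fintype V] [DecidableEq V]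

lemma card_filter_cover_eq_card_sigma (i : ℕ) :
    #{S : Finset (V ⊕ V) | (∀ v, inl v ∈ S ∨ inr v ∈ S) ∧ (∃ v, inr v ∈ S ∧ inl v ∉ S) ∧
        #S = Fintype.card V + i} =
      #(({R : Finset V | i < #R} : Finset _).sigma fun R ↦ R.powersetCard i) := by
  refine card_nbij' (fun S ↦ ⟨S.toRight, S.toLeft ∩ S.toRight⟩)
    (fun p ↦ (p.1ᶜ ∪ p.2).disjSum p.1) ?_ ?_ ?_ ?_
  · intro S hS
    simp only [coe_filter, mem_univ, true_and, Set.mem_ofPred_eq] at hS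
    obtain ⟨hcover, ⟨v, hv, hlv⟩, hcard⟩ := hS
    have hunion : S.toLeft ∪ S.toRight = univ :=
      eq_univ_of_forall fun v ↦ by simpa using hcover v
    have hinter : #(S.toLeft ∩ S.toRight) = i := by
      have := card_union_add_card_inter S.toLeft S.toRight
      rw [hunion, card_univ, card_toLeft_add_card_toRight, hcard] at this
      omega
    have hlt : i < #S.toRight := hinter ▸ card_lt_card
      ((ssubset_iff_of_subset inter_subset_right).2
        ⟨v, mem_toRight.2 hv, fun h ↦ hlv (mem_toLeft.1 (mem_inter.1 h).1)⟩)
    simp [hlt, hinter]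
  · rintro ⟨R, B⟩ hRB
    simp only [coe_sigma, Set.mem_sigma_iff, coe_filter, mem_univ, true_and, Set.mem_ofPred_eq,
      mem_coe, mem_powersetCard] at hRB
    obtain ⟨hlt, hBR, hB⟩ := hRB
    obtain ⟨v, hvR, hvB⟩ := exists_mem_notMem_of_card_lt_card (hB ▸ hlt)
    have hcard : #(Rᶜ ∪ B) + #R = Fintype.card V + i := by
      rw [card_union_of_disjoint (disjoint_compl_left.mono_right hBR), card_compl, hB]
      have := card_le_univ R
      omega
    simp only [coe_filter, mem_univ, true_and, Set.mem_ofPred_eq, inl_mem_disjSum,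
      inr_mem_disjSum, mem_union, mem_compl, card_disjSum, hcard]
    exact ⟨fun w ↦ by tauto, ⟨v, hvR, by tauto⟩, trivial⟩
  · intro S hS
    simp only [coe_filter, mem_univ, true_and, Set.mem_ofPred_eq] at hS
    ext (v | v)
    · have := hS.1 v
      simp only [inl_mem_disjSum, mem_union, mem_compl, mem_inter, mem_toLeft, mem_toRight]
      tauto
    · simp
  · rintro ⟨R, B⟩ hRB
    simp only [coe_sigma, Set.mem_sigma_iff, mem_coe, mem_powersetCard] at hRB
    refine Sigma.ext toRight_disjSum (heq_of_eq ?_)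
    dsimp only
    rw [toLeft_disjSum, toRight_disjSum, union_inter_distrib_right, inter_comm, inter_compl,
      empty_union, inter_eq_left.2 hRB.2.1]

end Counting

lemma sum_powerset_filter_lt_card_choose {α : Type*} (s : Finset α) (i : ℕ) :
    ∑ R ∈ s.powerset with i < #R, (#R).choose i =
      ∑ k ∈ Icc 1 (#s - i), (#s).choose (i + k) * (i + k).choose i := by
  rw [sum_filter]
  refine (sum_powerset_apply_card (fun m ↦ if i < m then m.choose i else 0)).trans ?_
  simp_rw [smul_eq_mul, mul_ite, mul_zero]
  rw [← sum_filter]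
  have : {m ∈ range (#s + 1) | i < m} = (Icc 1 (#s - i)).map (addLeftEmbedding i) := by
    ext m
    simp only [mem_filter, mem_range, mem_map, mem_Icc, addLeftEmbedding_apply]
    constructor
    · intro h
      exact ⟨m - i, by omega, by omega⟩
    · rintro ⟨k, hk, rfl⟩
      omega
  rw [this, sum_map]
  rfl

theorem isoDomCount_coronaK1_card_add {V : Type*} [Fintype V] {G : SimpleGraph V}
    (hG : ∀ v, ¬ G.IsIsolated v) (i : ℕ) :
    isoDomCount (coronaK1 G) (Fintype.card V + i) =
      ∑ k ∈ Icc 1 (Fintype.card V - i), (Fintype.card V).choose (i + k) * (i + k).choose i := by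
  classical
  have hset : {S : Finset (V ⊕ V) | IsIsolateDominatingSet (coronaK1 G) S ∧
        #S = Fintype.card V + i} =
      ↑({S : Finset (V ⊕ V) | (∀ v, inl v ∈ S ∨ inr v ∈ S) ∧ (∃ v, inr v ∈ S ∧ inl v ∉ S) ∧
        #S = Fintype.card V + i} : Finset _) := by
    ext S
    simp [isIsolateDominatingSet_coronaK1_iff hG, and_assoc]
  rw [isoDomCount, hset, Set.ncard_coe_finset, card_filter_cover_eq_card_sigma, card_sigma,
    ← card_univ, ← sum_powerset_filter_lt_card_choose, powerset_univ]
  simp_rw [card_powersetCard]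

theorem isoDomCount_centipede_general (n i : ℕ) (hn : 2 ≤ n) :
    isoDomCount (coronaK1 (SimpleGraph.pathGraph n)) (n + i) =
      ∑ k ∈ Finset.Icc 1 (n - i), n.choose (i + k) * (i + k).choose i := by
  have : Nontrivial (Fin n) := Fin.nontrivial_iff_two_le.2 hn
  simpa using isoDomCount_coronaK1_card_add (SimpleGraph.pathGraph_preconnected n).not_isIsolated i

theorem isoDomCount_centipede (n i : ℕ) (hn : 2 ≤ n) (hi : i ≤ n - 2) :
    isoDomCount (coronaK1 (SimpleGraph.pathGraph n)) (n + i) =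
      ∑ k ∈ Finset.Icc 1 (n - i), n.choose (i + k) * (i + k).choose i :=
  isoDomCount_centipede_general n i hn
end

section
/- Let G be a finite simple graph with at least one vertex. Then d_0(K_1 ∘ G, 1) = 1 + d_0(G, 1), where K_1 ∘ G is the graph obtained from G by adding one new vertex adjacent to every vertex of G. -/
open Finset

/-- The corona `K₁ ∘ G`: a copy of `G` together with one new vertex joined to
every vertex of `G`. -/
def coneK1 {V : Type*} (G : SimpleGraph V) : SimpleGraph (Option V) where
  Adj v w :=
    match v, w with
    | some a, some b => G.Adj a b
    | some _, none => True
    | none, some _ => True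
    | none, none => False
  symm := by
    constructor
    rintro (a | a) (b | b) h <;> simp_all
    exact G.adj_symm h
  loopless := by
    constructor
    rintro (a | a) h <;> simp_all

/- For `i = 1` an isolate dominating set is just a universal vertex, since a single vertex is
never adjacent to itself. The universal vertices of `K₁ ∘ G` are the apex together with the
universal vertices of `G`. -/

namespace SimpleGraph

variable {V : Type*} {G : SimpleGraph V}

theorem isDominatingSet_singleton_iff {v : V} : IsDominatingSet G {v} ↔ G.IsUniversal v := by
  simp only [IsDominatingSet, IsUniversal, Finset.mem_singleton, exists_eq_left]
  exact ⟨fun h w hvw => h w (Ne.symm hvw), fun h w hwv => h (Ne.symm hwv)⟩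

theorem isIsolateDominatingSet_singleton_iff {v : V} :
    IsIsolateDominatingSet G {v} ↔ G.IsUniversal v := by
  simp [IsIsolateDominatingSet, isDominatingSet_singleton_iff]

theorem isoDomCount_one [Fintype V] (G : SimpleGraph V) :
    isoDomCount G 1 = G.universalVerts.ncard := by
  have hsets : {S : Finset V | IsIsolateDominatingSet G S ∧ S.card = 1}
      = (fun v => {v}) '' G.universalVerts := by
    ext S
    simp only [Set.mem_ofPred_eq, Set.mem_image, Finset.card_eq_one, universalVerts]
    constructor
    · rintro ⟨hS, v, rfl⟩
      exact ⟨v, isIsolateDominatingSet_singleton_iff.mp hS, rfl⟩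
    · rintro ⟨v, hv, rfl⟩
      exact ⟨isIsolateDominatingSet_singleton_iff.mpr hv, v, rfl⟩
  rw [isoDomCount, hsets, Set.ncard_image_of_injective _ Finset.singleton_injective]

@[simp]
theorem coneK1_adj_some_some {a b : V} : (coneK1 G).Adj (some a) (some b) ↔ G.Adj a b :=
  Iff.rfl

@[simp]
theorem coneK1_adj_none_some {b : V} : (coneK1 G).Adj none (some b) :=
  trivial

@[simp]
theorem coneK1_adj_some_none {a : V} : (coneK1 G).Adj (some a) none :=
  trivial

theorem isUniversal_coneK1_none : (coneK1 G).IsUniversal none := by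
  rintro (_ | b) h
  · exact absurd rfl h
  · exact coneK1_adj_none_some

theorem isUniversal_coneK1_some_iff {a : V} :
    (coneK1 G).IsUniversal (some a) ↔ G.IsUniversal a := by
  constructor
  · intro h b hab
    exact coneK1_adj_some_some.mp (h (Option.some_injective V |>.ne hab))
  · rintro h (_ | b) hab
    · exact coneK1_adj_some_none
    · exact coneK1_adj_some_some.mpr (h (mt (congrArg some) hab))

theorem universalVerts_coneK1 :
    (coneK1 G).universalVerts = insert none (some '' G.universalVerts) := by
  ext (_ | a)
  · simpa [universalVerts] using isUniversal_coneK1_none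
  · simpa [universalVerts] using isUniversal_coneK1_some_iff

end SimpleGraph

theorem isoDomCount_coneK1_one_general {V : Type*} [Fintype V]
    (G : SimpleGraph V) : isoDomCount (coneK1 G) 1 = 1 + isoDomCount G 1 := by
  rw [SimpleGraph.isoDomCount_one, SimpleGraph.isoDomCount_one,
    SimpleGraph.universalVerts_coneK1, Set.ncard_insert_of_notMem (by simp),
    Set.ncard_image_of_injective _ (Option.some_injective V), add_comm]

theorem isoDomCount_coneK1_one {V : Type*} [Fintype V] [Nonempty V]
    (G : SimpleGraph V) : isoDomCount (coneK1 G) 1 = 1 + isoDomCount G 1 :=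
  isoDomCount_coneK1_one_general G
end

section
/- Let G be a finite simple graph with at least one vertex. Then for every natural number i ≥ 2, d_0(K_1 ∘ G, i) = d_0(G, i), where K_1 ∘ G is the graph obtained from G by adding one new vertex adjacent to every vertex of G. -/
open Finset

/-! The cone vertex of `K₁ ∘ G` is adjacent to every other vertex, so an isolate dominating set
with at least two vertices cannot contain it: it could be neither the isolated vertex (the set
would then be just the cone vertex) nor lie next to one. Such sets are therefore exactly the
images under `some` of isolate dominating sets of `G` of the same size; the cone vertex is
dominated because an isolate dominating set is nonempty. -/

section

variable {V : Type*} (G : SimpleGraph V)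

lemma coneK1_adj_some_some (a b : V) : (coneK1 G).Adj (some a) (some b) ↔ G.Adj a b := Iff.rfl

lemma coneK1_adj_some_none (a : V) : (coneK1 G).Adj (some a) none := trivial

lemma coneK1_adj_none_some (a : V) : (coneK1 G).Adj none (some a) := trivial

lemma none_notMem_of_exists_isolated_coneK1 {S : Finset (Option V)} (hS : 2 ≤ S.card)
    (hiso : ∃ v ∈ S, ∀ u ∈ S, ¬ (coneK1 G).Adj v u) : none ∉ S := by
  obtain ⟨v, -, hv⟩ := hiso
  intro hnone
  cases v with
  | some a => exact hv none hnone (coneK1_adj_some_none G a)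
  | none =>
    have hsub : S ⊆ {none} := by
      rintro (_ | b) hb
      · exact mem_singleton_self _
      · exact absurd (coneK1_adj_none_some G b) (hv _ hb)
    have := card_le_card hsub
    rw [card_singleton] at this
    omega

lemma isDominatingSet_coneK1_map_some_iff {T : Finset V} (hT : T.Nonempty) :
    IsDominatingSet (coneK1 G) (T.map .some) ↔ IsDominatingSet G T := by
  constructor
  · intro h a ha
    obtain ⟨u, hu, hadj⟩ := h (some a) (by simpa using ha)
    obtain ⟨b, hb, rfl⟩ := mem_map.1 hu
    exact ⟨b, hb, hadj⟩
  · rintro h (_ | a) ha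
    · obtain ⟨t, ht⟩ := hT
      exact ⟨some t, mem_map_of_mem _ ht, coneK1_adj_none_some G t⟩
    · obtain ⟨u, hu, hadj⟩ := h a (by simpa using ha)
      exact ⟨some u, mem_map_of_mem _ hu, hadj⟩

lemma exists_isolated_coneK1_map_some_iff {T : Finset V} :
    (∃ v ∈ T.map .some, ∀ u ∈ T.map .some, ¬ (coneK1 G).Adj v u) ↔
      ∃ v ∈ T, ∀ u ∈ T, ¬ G.Adj v u := by
  simp [coneK1_adj_some_some]

lemma isIsolateDominatingSet_coneK1_map_some_iff {T : Finset V} :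
    IsIsolateDominatingSet (coneK1 G) (T.map .some) ↔ IsIsolateDominatingSet G T := by
  rw [IsIsolateDominatingSet, IsIsolateDominatingSet, exists_isolated_coneK1_map_some_iff]
  exact and_congr_left fun ⟨v, hv, _⟩ => isDominatingSet_coneK1_map_some_iff G ⟨v, hv⟩

end

theorem isoDomCount_coneK1_general {V : Type*} [Fintype V]
    (G : SimpleGraph V) (i : ℕ) (hi : 2 ≤ i) :
    isoDomCount (coneK1 G) i = isoDomCount G i := by
  classical
  have hset : {S | IsIsolateDominatingSet (coneK1 G) S ∧ S.card = i} =
      map .some '' {T | IsIsolateDominatingSet G T ∧ T.card = i} := by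
    ext S
    constructor
    · rintro ⟨hS, rfl⟩
      have hnone := none_notMem_of_exists_isolated_coneK1 G hi hS.2
      have hS_eq : S.eraseNone.map .some = S := by
        rw [map_some_eraseNone, erase_eq_of_notMem hnone]
      refine ⟨S.eraseNone, ⟨?_, ?_⟩, hS_eq⟩
      · rwa [← isIsolateDominatingSet_coneK1_map_some_iff, hS_eq]
      · rw [← card_map .some, hS_eq]
    · rintro ⟨T, ⟨hT, rfl⟩, rfl⟩
      exact ⟨(isIsolateDominatingSet_coneK1_map_some_iff G).2 hT, card_map _⟩
  rw [isoDomCount, isoDomCount, hset, Set.ncard_image_of_injective _ (map_injective _)]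

theorem isoDomCount_coneK1 {V : Type*} [Fintype V] [Nonempty V]
    (G : SimpleGraph V) (i : ℕ) (hi : 2 ≤ i) :
    isoDomCount (coneK1 G) i = isoDomCount G i :=
  isoDomCount_coneK1_general G i hi
end
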